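/- Let X be a d-regular simple graph with d odd and d ≥ 3, and suppose X is class I (i.e., χ'(X) = d). Then there exists a cyclic truncation of X that is class I, i.e., has chromatic index 3. -/

import Mathlib

open SimpleGraph

/-- A proper edge coloring of a simple graph: distinct edges sharing a vertex
receive distinct colors. -/
def IsProperEdgeColoring {V α : Type*} (G : SimpleGraph V) (C : Sym2 V → α) : Prop :=
  ∀ e₁ ∈ G.edgeSet, ∀ e₂ ∈ G.edgeSet, e₁ ≠ e₂ → (∃ v, v ∈ e₁ ∧ v ∈ e₂) → C e₁ ≠ C e₂

/-- The chromatic index: least number of colors admitting a proper edge coloring. -/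
noncomputable def chromIndex {V : Type*} (G : SimpleGraph V) : ℕ :=
  sInf {k | ∃ C : Sym2 V → Fin k, IsProperEdgeColoring G C}

/-- Degree of a vertex. -/
noncomputable def deg {V : Type*} (G : SimpleGraph V) (v : V) : ℕ :=
  (G.neighborSet v).ncard

/-- Maximum degree. -/
noncomputable def maxDeg {V : Type*} (G : SimpleGraph V) : ℕ :=
  sSup (Set.range (deg G))

/-- A graph is class I if its chromatic index equals its maximum degree. -/
def ClassI {V : Type*} (G : SimpleGraph V) : Prop := chromIndex G = maxDeg G

/-- The sun over `G`: attach one pendant edge at each vertex of `G`. -/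
def sun {V : Type*} (G : SimpleGraph V) : SimpleGraph (V ⊕ V) :=
  SimpleGraph.fromRel (fun x y =>
    (∃ u v, G.Adj u v ∧ x = Sum.inl u ∧ y = Sum.inl v) ∨
    (∃ v, x = Sum.inl v ∧ y = Sum.inr v))

/-- The pendant edge of the sun attached at vertex `v`. -/
def pendant {V : Type*} (v : V) : Sym2 (V ⊕ V) := s(Sum.inl v, Sum.inr v)

/-- The generalized truncation of `X` determined by the graph `H` on the darts of `X`:
each dart is joined to its reverse dart (the matching `M_F`) and the edges of `H`
(the constituent edges) are added. -/
def trunc {V : Type*} (X : SimpleGraph V) (H : SimpleGraph X.Dart) : SimpleGraph X.Dart :=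
  SimpleGraph.fromRel (fun d d' => d' = d.symm ∨ H.Adj d d')

/-- The constituent graph `H` respects clusters: its edges join only darts with the
same initial vertex. -/
def RespectsClusters {V : Type*} (X : SimpleGraph V) (H : SimpleGraph X.Dart) : Prop :=
  ∀ d d' : X.Dart, H.Adj d d' → d.toProd.1 = d'.toProd.1

/-- The cluster at `v`: darts with initial vertex `v`. -/
def cluster {V : Type*} (X : SimpleGraph V) (v : V) : Set X.Dart :=
  {d : X.Dart | d.toProd.1 = v}

/-- The constituent at `v`, as a graph in its own right. -/
def constituent {V : Type*} (X : SimpleGraph V) (H : SimpleGraph X.Dart) (v : V) :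
    SimpleGraph (cluster X v) := H.induce (cluster X v)

/-- The complete truncation: every constituent is the complete graph on its cluster. -/
def completeTrunc {V : Type*} (X : SimpleGraph V) : SimpleGraph X.Dart :=
  trunc X (SimpleGraph.fromRel (fun d d' => d.toProd.1 = d'.toProd.1))

/-- `X` has no isolated vertices. -/
def NoIsolated {V : Type*} (X : SimpleGraph V) : Prop := ∀ v : V, ∃ w, X.Adj v w

/-- The number of edges of `X` of color `k` incident with `v`. -/
noncomputable def colorCountAt {V α : Type*} (X : SimpleGraph V) (c : Sym2 V → α)
    (v : V) (k : α) : ℕ :=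
  {e | e ∈ X.edgeSet ∧ v ∈ e ∧ c e = k}.ncard

/-- An edge coloring (not necessarily proper) is parity-balanced if for every vertex `v`
and every color `k`, the number of edges of color `k` incident with `v` has the same
parity as the degree of `v`. -/
def ParityBalanced {V : Type*} {m : ℕ} (X : SimpleGraph V) (c : Sym2 V → Fin m) : Prop :=
  ∀ (v : V) (k : Fin m), colorCountAt X c v k % 2 = deg X v % 2

/-- The edges of the sun centered at the constituent at `v`: the constituent edges
at `v` together with the matching edges incident with the cluster at `v`. -/
def sunEdges {V : Type*} (X : SimpleGraph V) (H : SimpleGraph X.Dart) (v : V) :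
    Set (Sym2 X.Dart) :=
  {e | e ∈ (trunc X H).edgeSet ∧ ∃ d : X.Dart, d ∈ e ∧ d.toProd.1 = v}

/-- `H` describes a cyclic truncation of `X`: it respects clusters and every
constituent is a cycle on its cluster. -/
def CyclicConstituents {V : Type*} (X : SimpleGraph V) (H : SimpleGraph X.Dart) : Prop :=
  RespectsClusters X H ∧ (∀ d : X.Dart, deg H d = 2) ∧
    ∀ v : V, (constituent X H v).Connected


/-!
Fix a proper `d`-edge-colouring `C` of `X`. As `X` is `d`-regular, every colour occurs exactly
once at every vertex, so `C` identifies each cluster with `Fin d`. Pulling the cycle `C_d` back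
along these identifications gives cyclic constituents, and both darts of an edge of `X` carry the
colour of that edge. Hence any proper edge colouring of the sun of `C_d` lifts to the truncation:
a constituent edge between darts of colours `i, j` gets the colour of `{i, j}`, a matching edge
between darts of colour `j` the colour of the pendant edge at `j`. For odd `d` the sun of `C_d`
is 3-edge-colourable, and the truncation is 3-regular, so its chromatic index is 3.
-/

section EdgeColoring

variable {V α : Type*} {G : SimpleGraph V}

theorem isProperEdgeColoring_iff (c : Sym2 V → α) :
    IsProperEdgeColoring G c ↔
      ∀ v a b, G.Adj v a → G.Adj v b → a ≠ b → c s(v, a) ≠ c s(v, b) := by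
  constructor
  · intro hc v a b ha hb hab
    exact hc _ ha _ hb (fun h => hab (Sym2.congr_right.mp h))
      ⟨v, Sym2.mem_mk_left _ _, Sym2.mem_mk_left _ _⟩
  · rintro hc e₁ he₁ e₂ he₂ hne ⟨v, hv₁, hv₂⟩
    obtain ⟨a, rfl⟩ := Sym2.mem_iff_exists.mp hv₁
    obtain ⟨b, rfl⟩ := Sym2.mem_iff_exists.mp hv₂
    exact hc v a b he₁ he₂ (fun h => hne (by rw [h]))

theorem ncard_neighborSet_le {k : ℕ} {c : Sym2 V → Fin k} (hc : IsProperEdgeColoring G c)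
    (v : V) : (G.neighborSet v).ncard ≤ k := by
  have hinj : Set.InjOn (fun w => c s(v, w)) (G.neighborSet v) :=
    fun a ha b hb hab => by_contra fun hne => (isProperEdgeColoring_iff c).mp hc v a b ha hb hne hab
  simpa using Set.ncard_le_ncard_of_injOn _ (fun _ _ => Set.mem_univ _) hinj

theorem chromIndex_eq_of_isEmpty [IsEmpty V] (G : SimpleGraph V) : chromIndex G = 0 :=
  Nat.sInf_eq_zero.mpr <| Or.inl ⟨isEmptyElim, fun e => isEmptyElim e⟩

theorem exists_isProperEdgeColoring_of_chromIndex_eq {k : ℕ} (h : chromIndex G = k)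
    (hk : k ≠ 0) : ∃ c : Sym2 V → Fin k, IsProperEdgeColoring G c := by
  subst h
  exact Nat.sInf_mem (Nat.nonempty_of_pos_sInf (Nat.pos_of_ne_zero hk))

theorem IsProperEdgeColoring.chromIndex_eq_of_deg_eq {k : ℕ} {c : Sym2 V → Fin k}
    (hc : IsProperEdgeColoring G c) {v : V} (hv : deg G v = k) : chromIndex G = k :=
  le_antisymm (Nat.sInf_le ⟨c, hc⟩) <| le_csInf ⟨k, c, hc⟩ fun _ ⟨_, hc'⟩ =>
    hv ▸ ncard_neighborSet_le hc' v

end EdgeColoring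

section Darts

variable {V α : Type*} {X : SimpleGraph V} {C : Sym2 V → α}

theorem IsProperEdgeColoring.dart_eq (hC : IsProperEdgeColoring X C) {a b : X.Dart}
    (hfst : a.fst = b.fst) (hcol : C a.edge = C b.edge) : a = b := by
  obtain ⟨⟨v, x⟩, hx⟩ := a
  obtain ⟨⟨v', y⟩, hy⟩ := b
  obtain rfl : v = v' := hfst
  by_cases hxy : x = y
  · subst hxy; rfl
  · exact absurd hcol ((isProperEdgeColoring_iff C).mp hC v x y hx hy hxy)

theorem IsProperEdgeColoring.exists_dart {d : ℕ} {C : Sym2 V → Fin d}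
    (hC : IsProperEdgeColoring X C) {v : V} (hv : deg X v = d) (j : Fin d) :
    ∃ a : X.Dart, a.fst = v ∧ C a.edge = j := by
  have hinj : Function.Injective fun w : X.neighborSet v => C s(v, w) :=
    fun a b hab => Subtype.ext <| by_contra fun hne =>
      (isProperEdgeColoring_iff C).mp hC v a b a.2 b.2 hne hab
  have hcard : Nat.card (Fin d) ≤ Nat.card (X.neighborSet v) := by
    rw [Nat.card_coe_set_eq, Nat.card_eq_fintype_card, Fintype.card_fin]; exact hv.ge
  obtain ⟨w, hw⟩ := (hinj.bijective_of_nat_card_le hcard).2 j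
  exact ⟨⟨(v, w), w.2⟩, rfl, hw⟩

theorem IsProperEdgeColoring.bijective_clusterColor {d : ℕ} {C : Sym2 V → Fin d}
    (hC : IsProperEdgeColoring X C) {v : V} (hv : deg X v = d) :
    Function.Bijective fun a : cluster X v => C a.1.edge := by
  refine ⟨fun a b hab => Subtype.ext (hC.dart_eq (a.2.trans b.2.symm) hab), fun j => ?_⟩
  obtain ⟨a, ha, hj⟩ := hC.exists_dart hv j
  exact ⟨⟨a, ha⟩, hj⟩

end Darts

section Truncation

variable {V α β : Type*} {X : SimpleGraph V}

theorem trunc_adj {H : SimpleGraph X.Dart} {a b : X.Dart} :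
    (trunc X H).Adj a b ↔ b = a.symm ∨ H.Adj a b := by
  rw [trunc, SimpleGraph.fromRel_adj]
  constructor
  · rintro ⟨-, (h | h) | (h | h)⟩
    exacts [.inl h, .inr h, .inl (by rw [h, Dart.symm_symm]), .inr h.symm]
  · rintro (rfl | h)
    exacts [⟨(Dart.symm_ne a).symm, .inl (.inl rfl)⟩, ⟨H.ne_of_adj h, .inl (.inr h)⟩]

theorem deg_trunc {H : SimpleGraph X.Dart} (hH : RespectsClusters X H) {a : X.Dart}
    (hfin : (H.neighborSet a).Finite) : deg (trunc X H) a = deg H a + 1 := by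
  have hsymm : a.symm ∉ H.neighborSet a := fun h => a.fst_ne_snd (hH a a.symm h)
  have hnbr : (trunc X H).neighborSet a = insert a.symm (H.neighborSet a) := by
    ext b
    exact trunc_adj
  rw [deg, deg, hnbr, Set.ncard_insert_of_notMem hsymm hfin]

def clusterComap (X : SimpleGraph V) (C : Sym2 V → α) (G : SimpleGraph α) :
    SimpleGraph X.Dart where
  Adj a b := a.fst = b.fst ∧ G.Adj (C a.edge) (C b.edge)
  symm.symm _ _ h := ⟨h.1.symm, h.2.symm⟩
  loopless.irrefl _ h := G.irrefl h.2

variable {C : Sym2 V → α} {G : SimpleGraph α}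

@[simp]
theorem clusterComap_adj {a b : X.Dart} :
    (clusterComap X C G).Adj a b ↔ a.fst = b.fst ∧ G.Adj (C a.edge) (C b.edge) :=
  Iff.rfl

theorem respectsClusters_clusterComap : RespectsClusters X (clusterComap X C G) :=
  fun _ _ h => h.1

noncomputable def constituentClusterComapIso {v : V}
    (hbij : Function.Bijective fun a : cluster X v => C a.1.edge) :
    constituent X (clusterComap X C G) v ≃g G where
  toEquiv := Equiv.ofBijective _ hbij
  map_rel_iff' {a b} := by
    simp only [constituent, comap_adj, Function.Embedding.subtype_apply, clusterComap_adj,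
      Equiv.ofBijective_apply, a.2.out.trans b.2.out.symm, true_and]

theorem deg_clusterComap {a : X.Dart}
    (hbij : Function.Bijective fun b : cluster X a.fst => C b.1.edge) :
    deg (clusterComap X C G) a = deg G (C a.edge) := by
  let e := Equiv.ofBijective _ hbij
  have hnbr : (clusterComap X C G).neighborSet a =
      (fun j => (e.symm j).1) '' G.neighborSet (C a.edge) := by
    ext b
    rw [mem_neighborSet, clusterComap_adj]
    constructor
    · rintro ⟨hab, hadj⟩
      exact ⟨C b.edge, hadj, congrArg Subtype.val (e.symm_apply_apply ⟨b, hab.symm⟩)⟩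
    · rintro ⟨j, hj, rfl⟩
      refine ⟨(e.symm j).2.symm, ?_⟩
      change G.Adj _ (e (e.symm j))
      rwa [e.apply_symm_apply]
  rw [deg, deg, hnbr]
  exact Set.ncard_image_of_injective _ (Subtype.val_injective.comp e.symm.injective)

/-- `c` together with its values on loops is a proper colouring of the sun of `G`, the loop
`s(i, i)` standing for the pendant edge at `i`: matching edges of the truncation map to loops. -/
theorem isProperEdgeColoring_trunc_clusterComap (hC : IsProperEdgeColoring X C)
    {c : Sym2 α → β} (hc : IsProperEdgeColoring G c)
    (hloop : ∀ i j, G.Adj i j → c s(i, i) ≠ c s(i, j)) :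
    IsProperEdgeColoring (trunc X (clusterComap X C G))
      (fun e => c (e.map fun a => C a.edge)) := by
  rw [isProperEdgeColoring_iff]
  intro a x y hx hy hxy
  simp only [Sym2.map_mk]
  simp only [trunc_adj, clusterComap_adj] at hx hy
  rcases hx with rfl | ⟨hx, hxG⟩ <;> rcases hy with rfl | ⟨hy, hyG⟩
  · exact absurd rfl hxy
  · rw [Dart.edge_symm]; exact hloop _ _ hyG
  · rw [Dart.edge_symm]; exact (hloop _ _ hxG).symm
  · refine (isProperEdgeColoring_iff c).mp hc _ _ _ hxG hyG fun h => hxy ?_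
    exact hC.dart_eq (hx.symm.trans hy) h

end Truncation

section OddCycle

/-- On vertex values `a, b < d`: the path edges `{i, i + 1}` alternate the colours `0, 1`, the
closing edge `{d - 1, 0}` gets `2`, and the loop `s(a, a)` gets the colour missing at `a`; for
`a = d - 1` this is `0` only because `d` is odd. -/
def cycleSunColor (d a b : ℕ) : Fin 3 :=
  if a = b then (if a = 0 then 1 else if a + 1 = d then 0 else 2)
  else if a + 1 = b then (if a % 2 = 0 then 0 else 1)
  else if b + 1 = a then (if b % 2 = 0 then 0 else 1)
  else 2

theorem cycleSunColor_comm (d a b : ℕ) : cycleSunColor d a b = cycleSunColor d b a := by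
  unfold cycleSunColor
  split_ifs <;> first | rfl | omega

def oddCycleColoring (d : ℕ) : Sym2 (Fin d) → Fin 3 :=
  Sym2.lift ⟨fun a b => cycleSunColor d a b, fun a b => cycleSunColor_comm d a b⟩

variable {n : ℕ}

theorem oddCycleColoring_ne (hn : Odd (n + 3)) (v : Fin (n + 3)) :
    oddCycleColoring (n + 3) s(v, v - 1) ≠ oddCycleColoring (n + 3) s(v, v + 1) ∧
      oddCycleColoring (n + 3) s(v, v) ≠ oddCycleColoring (n + 3) s(v, v - 1) ∧
      oddCycleColoring (n + 3) s(v, v) ≠ oddCycleColoring (n + 3) s(v, v + 1) := by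
  have hsucc :
      v.val + 1 = n + 3 ∧ (v + 1).val = 0 ∨ v.val + 1 < n + 3 ∧ (v + 1).val = v + 1 := by
    rw [Fin.val_add_one]
    split_ifs with h <;> simp only [Fin.ext_iff, Fin.val_last] at h <;> omega
  have hpred : v.val = 0 ∧ (v - 1).val = n + 2 ∨ 0 < v.val ∧ (v - 1).val = v - 1 := by
    rw [Fin.coe_sub_one]
    split_ifs with h <;> simp only [Fin.ext_iff, Fin.val_zero] at h <;> omega
  simp only [oddCycleColoring, Sym2.lift_mk]
  generalize (v + 1).val = b at hsucc
  generalize (v - 1).val = c at hpred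
  obtain ⟨m, hm⟩ := hn
  unfold cycleSunColor
  refine ⟨?_, ?_, ?_⟩ <;> split_ifs <;> first | decide | omega

theorem isProperEdgeColoring_oddCycleColoring (hn : Odd (n + 3)) :
    IsProperEdgeColoring (cycleGraph (n + 3)) (oddCycleColoring (n + 3)) := by
  rw [isProperEdgeColoring_iff]
  intro v a b ha hb hab
  rw [← mem_neighborSet, cycleGraph_neighborSet] at ha hb
  have hne := (oddCycleColoring_ne hn v).1
  rcases ha with rfl | rfl <;> rcases hb with rfl | rfl
  exacts [absurd rfl hab, hne, hne.symm, absurd rfl hab]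

theorem oddCycleColoring_loop_ne (hn : Odd (n + 3)) {v a : Fin (n + 3)}
    (ha : (cycleGraph (n + 3)).Adj v a) :
    oddCycleColoring (n + 3) s(v, v) ≠ oddCycleColoring (n + 3) s(v, a) := by
  rw [← mem_neighborSet, cycleGraph_neighborSet] at ha
  rcases ha with rfl | rfl
  exacts [(oddCycleColoring_ne hn v).2.1, (oddCycleColoring_ne hn v).2.2]

theorem deg_cycleGraph (v : Fin (n + 3)) : deg (cycleGraph (n + 3)) v = 2 := by
  rw [deg, ← Nat.card_coe_set_eq, Nat.card_eq_fintype_card, card_neighborSet_eq_degree,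
    cycleGraph_degree_three_le]

end OddCycle

theorem stmt11_general {V : Type*} (X : SimpleGraph V) (d : ℕ) (hd : Odd d)
    (hd3 : 3 ≤ d) (hreg : ∀ v, deg X v = d) (hclass : chromIndex X = d) :
    ∃ H : SimpleGraph X.Dart, CyclicConstituents X H ∧
      chromIndex (trunc X H) = 3 := by
  obtain ⟨n, rfl⟩ := Nat.exists_eq_add_of_le' hd3
  obtain ⟨C, hC⟩ := exists_isProperEdgeColoring_of_chromIndex_eq hclass (by omega)
  have hbij (v : V) : Function.Bijective fun a : cluster X v => C a.1.edge :=
    hC.bijective_clusterColor (hreg v)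
  set H := clusterComap X C (cycleGraph (n + 3))
  have hdegH (a : X.Dart) : deg H a = 2 :=
    (deg_clusterComap (hbij a.fst)).trans (deg_cycleGraph _)
  refine ⟨H, ⟨respectsClusters_clusterComap, hdegH, fun v =>
    (constituentClusterComapIso (hbij v)).connected_iff.mpr cycleGraph_connected⟩, ?_⟩
  obtain ⟨v⟩ : Nonempty V :=
    not_isEmpty_iff.mp fun _ => by have := chromIndex_eq_of_isEmpty X; omega
  obtain ⟨a, -⟩ := hC.exists_dart (hreg v) 0
  refine (isProperEdgeColoring_trunc_clusterComap hC (isProperEdgeColoring_oddCycleColoring hd)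
    fun _ _ => oddCycleColoring_loop_ne hd).chromIndex_eq_of_deg_eq (v := a) ?_
  rw [deg_trunc respectsClusters_clusterComap
    (Set.finite_of_ncard_ne_zero ((hdegH a).trans_ne two_ne_zero)), hdegH]

/-- a class I `d`-regular graph with `d` odd, `d ≥ 3`, has a class I
cyclic truncation. -/
theorem stmt11 {V : Type*} [Fintype V] (X : SimpleGraph V) (d : ℕ) (hd : Odd d)
    (hd3 : 3 ≤ d) (hreg : ∀ v, deg X v = d) (hclass : chromIndex X = d) :
    ∃ H : SimpleGraph X.Dart, CyclicConstituents X H ∧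
      chromIndex (trunc X H) = 3 :=
  stmt11_general X d hd hd3 hreg hclass
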